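/- Let ε > 0 and δ > 0 be real numbers, let m and p be real numbers with m ≥ 1 and p ≥ 2, let j and k be natural numbers with k ≥ 1, and let n_u and n_a be natural numbers with n_a ≥ 1. Define the sample-complexity bounds s_u = (1/ε) * (n_u * Real.log m + (j+1) * n_u * Real.log p + Real.log (1/δ)) and s_a = (1/ε) * (n_a * Real.log m + (j+1+k) * n_a * Real.log p + Real.log (1/δ)). If (n_u : ℝ) − (n_a : ℝ) > (k / (j+1)) * n_a, then s_u > s_a. (Theorem 1: comparison of the unabstracted and abstracted sample-complexity bounds.) -/

import Mathlib

/-!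
The hypothesis rearranges to `(j + 1 + k) n_a < (j + 1) n_u` and forces `n_a ≤ n_u`, so the
predicate-symbol term of `s_u` strictly dominates that of `s_a`, the metarule term dominates
weakly, and the `ln (1/δ)` terms cancel.
-/

open Real

/-- `v` is the number of predicate variables per metarule: `j + 1` without abstraction,
`j + 1 + k` with it. -/
noncomputable def blumerBound (ε δ m p v n : ℝ) : ℝ :=
  (1 / ε) * (n * log m + v * n * log p + log (1 / δ))

theorem blumerBound_lt_blumerBound {ε δ m p v v' n n' : ℝ} (hε : 0 < ε) (hm : 1 ≤ m)
    (hp : 1 < p) (hn : n ≤ n') (hvn : v * n < v' * n') :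
    blumerBound ε δ m p v n < blumerBound ε δ m p v' n' := by
  have hclauses : n * log m ≤ n' * log m := mul_le_mul_of_nonneg_right hn (log_nonneg hm)
  have hpreds : v * n * log p < v' * n' * log p := mul_lt_mul_of_pos_right hvn (log_pos hp)
  unfold blumerBound
  gcongr 1 / ε * (?_ + _)
  linarith

theorem add_mul_lt_mul_of_div_mul_lt_sub {c k x y : ℝ} (hc : 0 < c) (h : k / c * y < x - y) :
    (c + k) * y < c * x := by
  rw [div_mul_eq_mul_div, div_lt_iff₀ hc] at h
  linarith

theorem unabstracted_vs_abstracted_bounds_general (ε δ m p : ℝ) (hε : 0 < ε)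
    (hm : 1 ≤ m) (hp : 2 ≤ p) (j k : ℕ) (n_u n_a : ℕ)
    (s_u s_a : ℝ)
    (hsu : s_u = (1 / ε) * (n_u * Real.log m + (j + 1) * n_u * Real.log p + Real.log (1 / δ)))
    (hsa : s_a = (1 / ε) * (n_a * Real.log m + (j + 1 + k) * n_a * Real.log p + Real.log (1 / δ)))
    (h : (n_u : ℝ) - (n_a : ℝ) > ((k : ℝ) / ((j : ℝ) + 1)) * (n_a : ℝ)) :
    s_u > s_a := by
  have hvn : ((j : ℝ) + 1 + k) * n_a < ((j : ℝ) + 1) * n_u :=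
    add_mul_lt_mul_of_div_mul_lt_sub (by positivity) h
  have hn : (n_a : ℝ) ≤ n_u := by
    have : 0 ≤ (k : ℝ) / ((j : ℝ) + 1) * n_a := by positivity
    linarith
  rw [hsu, hsa]
  exact blumerBound_lt_blumerBound hε hm (by linarith) hn hvn

theorem unabstracted_vs_abstracted_bounds (ε δ m p : ℝ) (hε : 0 < ε) (hδ : 0 < δ)
    (hm : 1 ≤ m) (hp : 2 ≤ p) (j k : ℕ) (hk : 1 ≤ k) (n_u n_a : ℕ) (hna : 1 ≤ n_a)
    (s_u s_a : ℝ)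
    (hsu : s_u = (1 / ε) * (n_u * Real.log m + (j + 1) * n_u * Real.log p + Real.log (1 / δ)))
    (hsa : s_a = (1 / ε) * (n_a * Real.log m + (j + 1 + k) * n_a * Real.log p + Real.log (1 / δ)))
    (h : (n_u : ℝ) - (n_a : ℝ) > ((k : ℝ) / ((j : ℝ) + 1)) * (n_a : ℝ)) :
    s_u > s_a :=
  unabstracted_vs_abstracted_bounds_general ε δ m p hε hm hp j k n_u n_a s_u s_a hsu hsa h
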